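/- arXiv:1509.01387 — 4 statements merged into one kernel-verified Lean document; each statement's English description precedes it below -/
import Mathlib

section
/- Let A be the Frobenius algebra with basis (e_λ)_{λ∈Λ}, pairing b(e_λ, e_μ) = δ_{λμ†}, and product e_λ × e_μ = Σ_ν N_{λμν†} e_ν, where N_{λμν} = Σ_τ (S̲⁻¹)_{λτ}(S̲⁻¹)_{μτ}(S̲⁻¹)_{ντ} / (S̲⁻¹)_{1τ} for an invertible matrix S̲ with S̲ᵀS̲ = C and (S̲⁻¹)_{1τ} ≠ 0 for all τ. Then the elements ε̃_λ = Σ_μ (S̲⁻¹)_{1λ} S̲_{λμ} e_μ satisfy ε̃_λ × ε̃_μ = δ_{λμ} ε̃_λ, i.e. they form a canonical (idempotent) basis. -/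
open Matrix

/-- The elements `ε̃_λ = (S̲⁻¹)_{1λ} ∑_μ S̲_{λμ} e_μ` are idempotents of the fusion
product: `ε̃_λ × ε̃_μ = δ_{λμ} ε̃_λ`. -/
theorem canonical_basis_idempotent
    {Λ : Type*} [Fintype Λ] [DecidableEq Λ]
    (dag : Λ → Λ) (hdag : ∀ l, dag (dag l) = l)
    (one : Λ) (hone : dag one = one)
    (S : Matrix Λ Λ ℂ) (hS : IsUnit S.det)
    (hC : S.transpose * S = Matrix.of fun l m => if m = dag l then (1 : ℂ) else 0)
    (hne : ∀ τ, S⁻¹ one τ ≠ 0)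
    (N : Λ → Λ → Λ → ℂ)
    (hN : ∀ l m n, N l m n =
      ∑ τ, S⁻¹ l τ * S⁻¹ m τ * S⁻¹ n τ / (S⁻¹ one τ))
    (mul : (Λ → ℂ) → (Λ → ℂ) → (Λ → ℂ))
    (hmul : ∀ x y ν, mul x y ν = ∑ l, ∑ m, x l * y m * N l m (dag ν))
    (eps : Λ → Λ → ℂ)
    (heps : ∀ l m, eps l m = S⁻¹ one l * S l m) :
    ∀ l m, mul (eps l) (eps m) = if l = m then eps l else 0 := by
  set C : Matrix Λ Λ ℂ := Matrix.of fun l m => if m = dag l then (1 : ℂ) else 0 with hCdef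
  have hCC : C * C = 1 := by
    ext i j
    simp only [hCdef, Matrix.mul_apply, Matrix.of_apply, Matrix.one_apply,
      ite_mul, one_mul, zero_mul]
    rw [Finset.sum_ite_eq' Finset.univ (dag i)]
    simp [hdag i, eq_comm]
  have hinv : S⁻¹ = C * S.transpose := by
    apply Matrix.inv_eq_left_inv
    rw [Matrix.mul_assoc, hC, hCC]
  have key : ∀ n l : Λ, S⁻¹ (dag n) l = S l n := by
    intro n l
    rw [hinv, Matrix.mul_apply]
    simp only [hCdef, Matrix.of_apply, Matrix.transpose_apply, ite_mul, one_mul, zero_mul]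
    rw [Finset.sum_ite_eq' Finset.univ (dag (dag n))]
    simp [hdag]
  have hSSinv : ∀ i j : Λ, ∑ a, S i a * S⁻¹ a j = if i = j then (1 : ℂ) else 0 := by
    intro i j
    have h := Matrix.mul_nonsing_inv S hS
    have h2 : (S * S⁻¹) i j = (1 : Matrix Λ Λ ℂ) i j := by rw [h]
    simpa [Matrix.mul_apply, Matrix.one_apply] using h2
  intro l m
  funext ν
  rw [hmul]
  have step : ∀ a b : Λ, eps l a * eps m b * N a b (dag ν)
      = ∑ τ, (S⁻¹ one l * S⁻¹ one m) *
          ((S l a * S⁻¹ a τ) * ((S m b * S⁻¹ b τ) * (S⁻¹ (dag ν) τ / S⁻¹ one τ))) := by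
    intro a b
    rw [heps, heps, hN, Finset.mul_sum]
    exact Finset.sum_congr rfl fun τ _ => by ring
  simp_rw [step]
  rw [show (∑ a, ∑ b, ∑ τ, (S⁻¹ one l * S⁻¹ one m) *
        ((S l a * S⁻¹ a τ) * ((S m b * S⁻¹ b τ) * (S⁻¹ (dag ν) τ / S⁻¹ one τ))))
      = ∑ τ, ∑ a, ∑ b, (S⁻¹ one l * S⁻¹ one m) *
        ((S l a * S⁻¹ a τ) * ((S m b * S⁻¹ b τ) * (S⁻¹ (dag ν) τ / S⁻¹ one τ))) from by
    rw [show (∑ a, ∑ b, ∑ τ, (S⁻¹ one l * S⁻¹ one m) *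
        ((S l a * S⁻¹ a τ) * ((S m b * S⁻¹ b τ) * (S⁻¹ (dag ν) τ / S⁻¹ one τ))))
      = ∑ a, ∑ τ, ∑ b, (S⁻¹ one l * S⁻¹ one m) *
        ((S l a * S⁻¹ a τ) * ((S m b * S⁻¹ b τ) * (S⁻¹ (dag ν) τ / S⁻¹ one τ))) from
      Finset.sum_congr rfl fun a _ => Finset.sum_comm]
    exact Finset.sum_comm]
  have collapse : ∀ τ : Λ, (∑ a, ∑ b, (S⁻¹ one l * S⁻¹ one m) *
        ((S l a * S⁻¹ a τ) * ((S m b * S⁻¹ b τ) * (S⁻¹ (dag ν) τ / S⁻¹ one τ))))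
      = (S⁻¹ one l * S⁻¹ one m) *
        ((if l = τ then (1:ℂ) else 0) * ((if m = τ then (1:ℂ) else 0) *
          (S⁻¹ (dag ν) τ / S⁻¹ one τ))) := by
    intro τ
    rw [← hSSinv l τ, ← hSSinv m τ]
    simp only [Finset.mul_sum, Finset.sum_mul]
    rw [Finset.sum_comm]
  simp_rw [collapse]
  by_cases hlm : l = m
  · subst hlm
    simp only [if_pos rfl, mul_ite, mul_one, mul_zero, ite_mul, one_mul, zero_mul]
    rw [Finset.sum_ite_eq Finset.univ l]
    simp only [Finset.mem_univ, if_true]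
    rw [key ν l, heps, div_eq_mul_inv]
    rw [show S⁻¹ one l * S⁻¹ one l * (S l ν * (S⁻¹ one l)⁻¹)
        = (S⁻¹ one l * (S⁻¹ one l)⁻¹) * (S⁻¹ one l * S l ν) from by ring,
      mul_inv_cancel₀ (hne l), one_mul]
  · simp only [if_neg hlm]
    have hz : ∀ τ ∈ Finset.univ (α := Λ), (S⁻¹ one l * S⁻¹ one m) *
        ((if l = τ then (1:ℂ) else 0) * ((if m = τ then (1:ℂ) else 0) *
          (S⁻¹ (dag ν) τ / S⁻¹ one τ))) = 0 := by
      intro τ _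
      by_cases h1 : l = τ
      · by_cases h2 : m = τ
        · exact absurd (h1.trans h2.symm) hlm
        · simp [h2]
      · simp [h1]
    rw [Finset.sum_eq_zero hz]
    simp
end

section
/- (Verlinde formula, equivalence of two forms) Let S̲ be an invertible complex matrix indexed by finite Λ with involution †, satisfying S̲ᵀS̲ = C and (S̲⁻¹)_{1τ} ≠ 0. Define the operators 𝒞[λ] on ℂ[Λ] with matrix 𝒞[λ]_{νμ} = N_{λμν†}, and 𝒲 = Σ_μ Tr(𝒞[μ†]) 𝒞[μ]. Then the (1,1)-matrix entry of 𝒞[λ₁]⋯𝒞[λₙ]𝒲^g equals Σ_{τ∈Λ} (S̲⁻¹)_{λ₁τ}⋯(S̲⁻¹)_{λₙτ} / [(S̲⁻¹)_{1τ}]^{2g−2+n}. -/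
open Matrix

/-- Product of a list of diagonal matrices given by `Fin n` indexed functions. -/
lemma diag_ofFn_prod {Λ : Type*} [Fintype Λ] [DecidableEq Λ] (n : ℕ) (d : Fin n → Λ → ℂ) :
    (List.ofFn fun i => Matrix.diagonal (d i)).prod
      = Matrix.diagonal (fun τ => ∏ i, d i τ) := by
  induction n with
  | zero => simp
  | succ m ih =>
    rw [List.ofFn_succ, List.prod_cons, ih, Matrix.diagonal_mul_diagonal]
    exact congrArg Matrix.diagonal (funext fun τ => (Fin.prod_univ_succ (fun i => d i τ)).symm)

/-- A sum of scalar multiples of diagonal matrices is diagonal. -/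
lemma sum_smul_diagonal {Λ : Type*} [Fintype Λ] [DecidableEq Λ]
    (c : Λ → ℂ) (e : Λ → Λ → ℂ) :
    ∑ μ, c μ • Matrix.diagonal (e μ) = Matrix.diagonal (fun τ => ∑ μ, c μ * e μ τ) := by
  ext τ σ
  simp only [Matrix.sum_apply, Matrix.smul_apply, Matrix.diagonal_apply, smul_eq_mul]
  by_cases h : τ = σ <;> simp [h]

/-- Verlinde formula: the `(1,1)` entry of `𝒞[λ₁]⋯𝒞[λₙ] 𝒲^g` equals
`∑_τ ∏ᵢ (S̲⁻¹)_{λᵢτ} / [(S̲⁻¹)_{1τ}]^{2g-2+n}`. -/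
theorem verlinde_formula_equivalence
    {Λ : Type*} [Fintype Λ] [DecidableEq Λ]
    (dag : Λ → Λ) (hdag : ∀ l, dag (dag l) = l)
    (one : Λ) (hone : dag one = one)
    (S : Matrix Λ Λ ℂ) (hS : IsUnit S.det)
    (hC : S.transpose * S = Matrix.of fun l m => if m = dag l then (1 : ℂ) else 0)
    (hne : ∀ τ, S⁻¹ one τ ≠ 0)
    (N : Λ → Λ → Λ → ℂ)
    (hN : ∀ l m n, N l m n =
      ∑ τ, S⁻¹ l τ * S⁻¹ m τ * S⁻¹ n τ / (S⁻¹ one τ))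
    (Cop : Λ → Matrix Λ Λ ℂ)
    (hCop : ∀ l ν μ, Cop l ν μ = N l μ (dag ν))
    (W : Matrix Λ Λ ℂ)
    (hW : W = ∑ μ, (Cop (dag μ)).trace • Cop μ)
    (g n : ℕ) (hn : 1 ≤ n) (lam : Fin n → Λ) :
    ((List.ofFn fun i => Cop (lam i)).prod * W ^ g) one one
      = ∑ τ, (∏ i, S⁻¹ (lam i) τ) / (S⁻¹ one τ) ^ (2 * (g : ℤ) - 2 + n) := by
  set T := S⁻¹ with hT
  -- the charge conjugation matrix
  set Cm : Matrix Λ Λ ℂ := Matrix.of (fun l m => if m = dag l then (1 : ℂ) else 0) with hCm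
  have hCC : Cm * Cm = 1 := by
    ext l m
    simp only [Matrix.mul_apply, hCm, Matrix.of_apply, Matrix.one_apply]
    rw [Finset.sum_congr rfl (fun k _ => by
      rw [ite_mul, one_mul, zero_mul])]
    rw [Finset.sum_ite_eq' Finset.univ (dag l) (fun k => if m = dag k then (1:ℂ) else 0)]
    simp [hdag l, eq_comm]
  have hinv : T = Cm * S.transpose := by
    rw [hT]
    apply Matrix.inv_eq_left_inv
    rw [Matrix.mul_assoc, hC]
    exact hCC
  have hTS : ∀ l τ, T l τ = S τ (dag l) := by
    intro l τ
    rw [hinv]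
    simp only [Matrix.mul_apply, hCm, Matrix.of_apply, Matrix.transpose_apply]
    rw [Finset.sum_congr rfl (fun k _ => by rw [ite_mul, one_mul, zero_mul])]
    rw [Finset.sum_ite_eq' Finset.univ (dag l) (fun k => S τ k)]
    simp
  have hST : S * T = 1 := Matrix.mul_nonsing_inv S hS
  have hTS1 : T * S = 1 := Matrix.nonsing_inv_mul S hS
  have h1 : S.transpose * T.transpose = 1 := by
    rw [← Matrix.transpose_mul, hTS1, Matrix.transpose_one]
  have h2 : T.transpose * S.transpose = 1 := by
    rw [← Matrix.transpose_mul, hST, Matrix.transpose_one]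
  -- the conjugation monoid hom
  let φ : Matrix Λ Λ ℂ →* Matrix Λ Λ ℂ :=
    { toFun := fun X => S.transpose * X * T.transpose
      map_one' := by
        show S.transpose * 1 * T.transpose = 1
        rw [Matrix.mul_one]; exact h1
      map_mul' := by
        intro X Y
        show S.transpose * (X * Y) * T.transpose
          = (S.transpose * X * T.transpose) * (S.transpose * Y * T.transpose)
        calc S.transpose * (X * Y) * T.transpose
            = S.transpose * X * (T.transpose * S.transpose) * Y * T.transpose := by
              rw [h2]; noncomm_ring
          _ = S.transpose * X * T.transpose * (S.transpose * Y * T.transpose) := by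
              noncomm_ring }
  have hφ : ∀ X, φ X = S.transpose * X * T.transpose := fun _ => rfl
  have hCopE : ∀ l, Cop l = φ (Matrix.diagonal (fun τ => T l τ / T one τ)) := by
    intro l
    ext ν μ
    rw [hφ, hCop, hN, Matrix.mul_apply]
    refine Finset.sum_congr rfl (fun τ _ => ?_)
    rw [Matrix.mul_diagonal, hTS (dag ν) τ, hdag]
    simp only [Matrix.transpose_apply]
    ring
  have htraceφ : ∀ X, (φ X).trace = X.trace := by
    intro X
    rw [hφ, Matrix.trace_mul_cycle, h2, Matrix.one_mul]
  have htrace : ∀ l, (Cop l).trace = ∑ σ, T l σ / T one σ := by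
    intro l
    rw [hCopE, htraceφ, Matrix.trace_diagonal]
  -- W is conjugated diagonal
  have hWφ : W = φ (Matrix.diagonal (fun τ => (T one τ ^ 2)⁻¹)) := by
    rw [hW]
    have step : ∀ μ : Λ, (Cop (dag μ)).trace • Cop μ
        = S.transpose * ((Cop (dag μ)).trace • Matrix.diagonal (fun τ => T μ τ / T one τ))
          * T.transpose := by
      intro μ
      rw [Matrix.mul_smul, Matrix.smul_mul, ← hφ, ← hCopE]
    rw [Finset.sum_congr rfl (fun μ _ => step μ), ← Finset.sum_mul, ← Matrix.mul_sum, hφ,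
      sum_smul_diagonal]
    congr 1
    congr 1
    refine congrArg Matrix.diagonal (funext fun τ => ?_)
    have key : ∀ μ : Λ, (Cop (dag μ)).trace * (T μ τ / T one τ)
        = ∑ σ, (S σ μ * T μ τ) * (1 / (T one σ * T one τ)) := by
      intro μ
      rw [htrace, Finset.sum_mul]
      refine Finset.sum_congr rfl (fun σ _ => ?_)
      rw [hTS (dag μ) σ, hdag]
      ring
    rw [Finset.sum_congr rfl (fun μ _ => key μ), Finset.sum_comm]
    have key2 : ∀ σ : Λ, (∑ μ : Λ, (S σ μ * T μ τ) * (1 / (T one σ * T one τ)))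
        = (if σ = τ then 1 else 0) * (1 / (T one σ * T one τ)) := by
      intro σ
      rw [← Finset.sum_mul]
      congr 1
      have hm : (∑ μ : Λ, S σ μ * T μ τ) = (S * T) σ τ := by rw [Matrix.mul_apply]
      rw [hm, hST, Matrix.one_apply]
    rw [Finset.sum_congr rfl (fun σ _ => key2 σ)]
    rw [Finset.sum_congr rfl (fun σ _ => by rw [ite_mul, one_mul, zero_mul])]
    rw [Finset.sum_ite_eq' Finset.univ τ (fun σ => 1 / (T one σ * T one τ))]
    simp only [Finset.mem_univ, if_true]
    rw [sq]
    field_simp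
  -- assemble
  have hprod : (List.ofFn fun i => Cop (lam i)).prod * W ^ g
      = φ ((List.ofFn fun i => Matrix.diagonal (fun τ => T (lam i) τ / T one τ)).prod
          * (Matrix.diagonal (fun τ => (T one τ ^ 2)⁻¹)) ^ g) := by
    rw [MonoidHom.map_mul, MonoidHom.map_pow, ← hWφ]
    congr 1
    rw [map_list_prod, List.map_ofFn]
    exact congrArg List.prod (congrArg List.ofFn (funext fun i => hCopE (lam i)))
  rw [hprod]
  rw [diag_ofFn_prod, Matrix.diagonal_pow, Matrix.diagonal_mul_diagonal, hφ,
      Matrix.mul_apply]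
  refine Finset.sum_congr rfl (fun τ _ => ?_)
  rw [Matrix.mul_diagonal]
  simp only [Matrix.transpose_apply, Pi.pow_apply]
  have hS1 : S τ one = T one τ := by rw [hTS one τ, hone]
  have ht := hne τ
  set t := T one τ with htdef
  rw [hS1]
  have hprod2 : (∏ i, T (lam i) τ / t) = (∏ i, T (lam i) τ) / t ^ n := by
    rw [Finset.prod_div_distrib, Finset.prod_const]
    simp
  rw [hprod2]
  have hpow : ((t ^ 2)⁻¹) ^ g = (t ^ (2 * g))⁻¹ := by
    rw [← inv_pow, ← pow_mul, inv_pow]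
  rw [hpow]
  have he : (2 * (g:ℤ) - 2 + n) = ((2 * g + n : ℕ) : ℤ) - ((2:ℕ) : ℤ) := by push_cast; ring
  rw [he, zpow_sub₀ ht, zpow_natCast, zpow_natCast]
  rw [pow_add]
  field_simp
end

section
/- The operator 𝒲 = Σ_{μ∈Λ} Tr(𝒞[μ†]) 𝒞[μ] acts on each eigenvector ε_τ by 𝒲(ε_τ) = ε_τ / [(S̲⁻¹)_{1τ}]². -/
open Matrix

/-- The operator `𝒲 = ∑_μ Tr(𝒞[μ†]) 𝒞[μ]` acts on each eigenvector `ε_τ` by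
`𝒲(ε_τ) = ε_τ / [(S̲⁻¹)_{1τ}]²`. -/
theorem W_operator_eigenvalue
    {Λ : Type*} [Fintype Λ] [DecidableEq Λ]
    (dag : Λ → Λ) (hdag : ∀ l, dag (dag l) = l)
    (one : Λ) (hone : dag one = one)
    (S : Matrix Λ Λ ℂ) (hS : IsUnit S.det)
    (hC : S.transpose * S = Matrix.of fun l m => if m = dag l then (1 : ℂ) else 0)
    (hne : ∀ τ, S⁻¹ one τ ≠ 0)
    (N : Λ → Λ → Λ → ℂ)
    (hN : ∀ l m n, N l m n =
      ∑ τ, S⁻¹ l τ * S⁻¹ m τ * S⁻¹ n τ / (S⁻¹ one τ))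
    (Cop : Λ → Matrix Λ Λ ℂ)
    (hCop : ∀ l ν μ, Cop l ν μ = N l μ (dag ν))
    (W : Matrix Λ Λ ℂ)
    (hW : W = ∑ μ, (Cop (dag μ)).trace • Cop μ)
    (eps : Λ → Λ → ℂ)
    (heps : ∀ τ μ, eps τ μ = S τ μ) :
    ∀ τ, W.mulVec (eps τ) = (1 / (S⁻¹ one τ) ^ 2) • eps τ := by
  intro τ
  have hSinv : S * S⁻¹ = 1 := Matrix.mul_nonsing_inv S hS
  have hCC : (Matrix.of fun l m => if m = dag l then (1 : ℂ) else 0) *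
      (Matrix.of fun l m => if m = dag l then (1 : ℂ) else 0) = (1 : Matrix Λ Λ ℂ) := by
    ext l m
    simp only [Matrix.mul_apply, Matrix.of_apply, Matrix.one_apply, ite_mul, one_mul, zero_mul,
      Finset.sum_ite_eq', Finset.mem_univ, if_true, hdag]
    by_cases h : m = l
    · simp [h]
    · simp [h, Ne.symm h]
  have hinv : S⁻¹ = (Matrix.of fun l m => if m = dag l then (1 : ℂ) else 0) * S.transpose := by
    apply Matrix.inv_eq_left_inv
    rw [Matrix.mul_assoc, hC, hCC]
  have key : ∀ ν σ, S⁻¹ (dag ν) σ = S σ ν := by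
    intro ν σ
    rw [hinv]
    simp [Matrix.mul_apply, hdag, ite_mul, Finset.sum_ite_eq']
  have hdiag : ∀ σ, ∑ ν, S σ ν * S⁻¹ ν σ = 1 := by
    intro σ
    have := congrFun (congrFun hSinv σ) σ
    simpa [Matrix.mul_apply, Matrix.one_apply] using this
  have horth : ∀ σ, ∑ ρ, S σ ρ * S⁻¹ ρ τ = if σ = τ then 1 else 0 := by
    intro σ
    have := congrFun (congrFun hSinv σ) τ
    simpa [Matrix.mul_apply, Matrix.one_apply] using this
  have horth2 : ∀ σ, ∑ μ, S τ μ * S⁻¹ μ σ = if τ = σ then 1 else 0 := by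
    intro σ
    have := congrFun (congrFun hSinv τ) σ
    simpa [Matrix.mul_apply, Matrix.one_apply] using this
  have trace_eq : ∀ ρ, (Cop (dag ρ)).trace = ∑ σ, S σ ρ / S⁻¹ one σ := by
    intro ρ
    simp only [Matrix.trace, Matrix.diag_apply, hCop, hN, key]
    rw [Finset.sum_comm]
    refine Finset.sum_congr rfl fun σ _ => ?_
    calc ∑ ν, S σ ρ * S⁻¹ ν σ * S σ ν / S⁻¹ one σ
        = (∑ ν, S σ ν * S⁻¹ ν σ) * (S σ ρ / S⁻¹ one σ) := by
          rw [Finset.sum_mul]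
          exact Finset.sum_congr rfl fun ν _ => by ring
      _ = S σ ρ / S⁻¹ one σ := by rw [hdiag]; ring
  have eigen : ∀ l ν, ∑ μ, Cop l ν μ * S τ μ = S⁻¹ l τ * S τ ν / S⁻¹ one τ := by
    intro l ν
    simp only [hCop, hN, key, Finset.sum_mul]
    rw [Finset.sum_comm]
    have step : ∀ σ, (∑ μ, S⁻¹ l σ * S⁻¹ μ σ * S σ ν / S⁻¹ one σ * S τ μ)
        = (if τ = σ then 1 else 0) * (S⁻¹ l σ * S σ ν / S⁻¹ one σ) := by
      intro σ
      rw [← horth2 σ, Finset.sum_mul]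
      exact Finset.sum_congr rfl fun μ _ => by ring
    simp only [step, ite_mul, one_mul, zero_mul, Finset.sum_ite_eq, Finset.mem_univ, if_true]
  funext ν
  rw [hW]
  simp only [Matrix.mulVec, dotProduct, Matrix.sum_apply, Matrix.smul_apply, smul_eq_mul,
    heps, Pi.smul_apply]
  simp only [Finset.sum_mul]
  rw [Finset.sum_comm]
  have h1 : ∀ ρ, ∑ μ, (Cop (dag ρ)).trace * Cop ρ ν μ * S τ μ
      = (∑ σ, S σ ρ / S⁻¹ one σ) * (S⁻¹ ρ τ * S τ ν / S⁻¹ one τ) := by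
    intro ρ
    rw [← trace_eq, ← eigen ρ ν, Finset.mul_sum]
    exact Finset.sum_congr rfl fun μ _ => by ring
  simp only [h1, Finset.sum_mul]
  rw [Finset.sum_comm]
  have h2 : ∀ σ, (∑ ρ, S σ ρ / S⁻¹ one σ * (S⁻¹ ρ τ * S τ ν / S⁻¹ one τ))
      = (if σ = τ then 1 else 0) * (S τ ν / (S⁻¹ one σ * S⁻¹ one τ)) := by
    intro σ
    rw [← horth σ, Finset.sum_mul]
    exact Finset.sum_congr rfl fun ρ _ => by ring
  simp only [h2, ite_mul, one_mul, zero_mul, Finset.sum_ite_eq', Finset.mem_univ, if_true]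
  field_simp
end

section
/- If R(u) ∈ End(A)[[u]] satisfies the symplectic condition R(u) R†(−u) = id, where R† is the adjoint with respect to a non-degenerate symmetric bilinear form b, then the formal expression B(u₁, u₂) = (b† − R(u₁) ⊗ R(u₂) · b†)/(u₁ + u₂) is a well-defined element of (A ⊗ A)[[u₁, u₂]], i.e. the numerator is divisible by u₁ + u₂ in A ⊗ A[[u₁, u₂]]. -/
/-!
Divisibility of a series `F(u₁, u₂)` by `u₁ + u₂` is equivalent to `F(u, -u) = 0`, i.e. to the
vanishing of the alternating sums of the coefficients of `F` along each antidiagonal; the quotient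
is then obtained by peeling off one coefficient at a time. For `F = b† - R(u₁) ⊗ R(u₂) · b†`,
contracting the first tensor slot with `b y` turns `(R i ⊗ R j) b†` into `R j (R†ᵢ y)`, so these
alternating sums become the coefficients of `R(u) R†(-u) - id` applied to `y`; since contraction
against all `b y` is injective by non-degeneracy, they vanish.
-/

open TensorProduct Finset Finset.Nat

section Division

variable {S M : Type*} [Ring S] [AddCommGroup M] [Module S M]

/-- Coefficients of `F / (u₁ + u₂)` for `F = ∑ N i j u₁ⁱ u₂ʲ`, solved from
`N (i + 1) (j + 1) = B i (j + 1) + B (i + 1) j` starting at `N 0 (j + 1) = B 0 j`. -/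
def divByAdd (N : ℕ → ℕ → M) : ℕ → ℕ → M
  | 0, j => N 0 (j + 1)
  | i + 1, j => N (i + 1) (j + 1) - divByAdd N i (j + 1)

variable (S) in
theorem neg_one_pow_smul_divByAdd (N : ℕ → ℕ → M) (i j : ℕ) :
    (-1 : S) ^ i • divByAdd N i j = ∑ k ∈ range (i + 1), (-1 : S) ^ k • N k (i + 1 + j - k) := by
  induction i generalizing j with
  | zero => simp [divByAdd, add_comm]
  | succ i ih =>
    rw [sum_range_succ, show i + 1 + 1 + j = i + 1 + (j + 1) by omega, ← ih, divByAdd, smul_sub,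
      Nat.add_sub_cancel_left, pow_succ, mul_neg_one, neg_smul, neg_smul]
    abel

theorem exists_div_add_of_alternating_sum_antidiagonal_eq_zero (N : ℕ → ℕ → M)
    (h : ∀ m, ∑ p ∈ antidiagonal m, (-1 : S) ^ p.1 • N p.1 p.2 = 0) :
    ∃ B : ℕ → ℕ → M, ∀ d₁ d₂, N d₁ d₂ =
      (if d₁ = 0 then 0 else B (d₁ - 1) d₂) + (if d₂ = 0 then 0 else B d₁ (d₂ - 1)) := by
  refine ⟨divByAdd N, ?_⟩
  rintro (_ | i) (_ | j)
  · simpa using h 0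
  · simp [divByAdd]
  · have hsum := h (i + 1)
    have hB := neg_one_pow_smul_divByAdd S N i 0
    rw [add_zero] at hB
    rw [sum_antidiagonal_eq_sum_range_succ (fun k l => (-1 : S) ^ k • N k l), sum_range_succ,
      ← hB, Nat.sub_self, pow_succ, mul_neg_one, neg_smul,
      ← sub_eq_add_neg, sub_eq_zero] at hsum
    simpa using ((isUnit_neg_one.pow i).smul_left_cancel).1 hsum.symm
  · simp [divByAdd]

end Division

section Contraction

variable {R M N P : Type*} [CommRing R] [AddCommGroup M] [Module R M] [AddCommGroup N]
  [Module R N] [AddCommGroup P] [Module R P]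

noncomputable def contractFst (b : M →ₗ[R] P →ₗ[R] R) (y : M) : P ⊗[R] N →ₗ[R] N :=
  lift (LinearMap.lsmul R N ∘ₗ b y)

@[simp]
theorem contractFst_tmul (b : M →ₗ[R] P →ₗ[R] R) (y : M) (a : P) (c : N) :
    contractFst b y (a ⊗ₜ c) = b y a • c :=
  rfl

theorem contractFst_eq_dualTensorHom (b : M →ₗ[R] P →ₗ[R] R) (y : M) (t : P ⊗[R] N) :
    contractFst b y t = dualTensorHom R M N (b.flip.rTensor N t) y := by
  induction t using TensorProduct.induction_on with
  | zero => simp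
  | tmul a c => rfl
  | add s t hs ht => simp [hs, ht]

theorem eq_zero_of_forall_contractFst_eq_zero [Module.Finite R M] [Module.Projective R M]
    [Module.Flat R N] (b : M →ₗ[R] P →ₗ[R] R) (hb : ∀ x, (∀ y, b y x = 0) → x = 0)
    {t : P ⊗[R] N} (ht : ∀ y, contractFst b y t = 0) : t = 0 := by
  have hflip : Function.Injective b.flip :=
    (injective_iff_map_eq_zero _).2 fun x hx => hb x fun y => LinearMap.congr_fun hx y
  have hdual : dualTensorHom R M N (b.flip.rTensor N t) = 0 :=
    LinearMap.ext fun y => by rw [← contractFst_eq_dualTensorHom, ht, LinearMap.zero_apply]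
  rw [← map_zero (dualTensorHom R M N), dualTensorHom_bijective.1.eq_iff,
    ← map_zero (b.flip.rTensor N),
    (Module.Flat.rTensor_preserves_injective_linearMap _ hflip).eq_iff] at hdual
  exact hdual

theorem contractFst_map (b : M →ₗ[R] M →ₗ[R] R) (f : M →ₗ[R] M) (g : N →ₗ[R] P) {y y' : M}
    (hy : ∀ x, b y (f x) = b y' x) (t : M ⊗[R] N) :
    contractFst b y (map f g t) = g (contractFst b y' t) := by
  induction t using TensorProduct.induction_on with
  | zero => simp
  | tmul a c => simp [hy]
  | add s t hs ht => simp [hs, ht]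

end Contraction

theorem sum_antidiagonal_map_eq_zero_of_symplectic {K V : Type*} [CommRing K] [AddCommGroup V]
    [Module K V] [Module.Finite K V] [Module.Projective K V] (b : V →ₗ[K] V →ₗ[K] K)
    (hb : ∀ x, (∀ y, b y x = 0) → x = 0) (R Radj : ℕ → Module.End K V)
    (hadj : ∀ n x y, b y (R n x) = b (Radj n y) x)
    (hsympl : ∀ n, 1 ≤ n →
      ∑ i ∈ range (n + 1), ((-1 : K) ^ (n - i)) • (R i ∘ₗ Radj (n - i)) = 0)
    (bdual : V ⊗[K] V) (hbd : ∀ x, contractFst b x bdual = x) {m : ℕ} (hm : 1 ≤ m) :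
    ∑ p ∈ antidiagonal m, (-1 : K) ^ p.1 • map (R p.1) (R p.2) bdual = 0 := by
  have hsum := hsympl m hm
  rw [← sum_antidiagonal_eq_sum_range_succ (fun i j => (-1 : K) ^ j • (R i ∘ₗ Radj j)),
    ← sum_antidiagonal_swap] at hsum
  refine eq_zero_of_forall_contractFst_eq_zero b hb fun y => ?_
  calc contractFst b y (∑ p ∈ antidiagonal m, (-1 : K) ^ p.1 • map (R p.1) (R p.2) bdual)
      = ∑ p ∈ antidiagonal m, (-1 : K) ^ p.1 • R p.2 (Radj p.1 y) := by
        simp only [map_sum, map_smul, contractFst_map b _ _ (hadj _ · y), hbd]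
    _ = (∑ p ∈ antidiagonal m, (-1 : K) ^ p.1 • (R p.2 ∘ₗ Radj p.1)) y := by simp
    _ = 0 := by
        simp only [Prod.fst_swap, Prod.snd_swap] at hsum
        rw [hsum, LinearMap.zero_apply]

/-- If `R(u)` satisfies the symplectic condition `R(u)R†(-u) = id`, then the numerator
`b† - R(u₁)⊗R(u₂)·b†` of `B(u₁,u₂)` is divisible by `u₁ + u₂` in `(A⊗A)[[u₁,u₂]]`:
coefficientwise, there is a double sequence `B` of elements of `A⊗A` such that the
`(d₁,d₂)`-coefficient of the numerator equals `B (d₁-1) d₂ + B d₁ (d₂-1)`. -/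
theorem B_series_well_defined
    {A : Type*} [AddCommGroup A] [Module ℂ A] [FiniteDimensional ℂ A]
    (b : A →ₗ[ℂ] A →ₗ[ℂ] ℂ)
    (hsymm : ∀ x y, b x y = b y x)
    (hnd : ∀ x, (∀ y, b x y = 0) → x = 0)
    (R Radj : ℕ → Module.End ℂ A)
    (hR0 : R 0 = 1)
    (hadj : ∀ n x y, b (R n x) y = b x (Radj n y))
    (hsympl : ∀ n, 1 ≤ n →
      ∑ i ∈ Finset.range (n + 1), ((-1 : ℂ) ^ (n - i)) • (R i ∘ₗ Radj (n - i)) = 0)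
    (bdual : TensorProduct ℂ A A)
    (hbd : ∀ x : A,
      TensorProduct.lift ((LinearMap.lsmul ℂ A) ∘ₗ (b x)) bdual = x) :
    ∃ B : ℕ → ℕ → TensorProduct ℂ A A,
      ∀ d₁ d₂ : ℕ,
        (if d₁ = 0 ∧ d₂ = 0 then bdual else 0)
            - TensorProduct.map (R d₁) (R d₂) bdual
          = (if d₁ = 0 then 0 else B (d₁ - 1) d₂)
            + (if d₂ = 0 then 0 else B d₁ (d₂ - 1)) := by
  have hb : ∀ x, (∀ y, b y x = 0) → x = 0 := fun x hx => hnd x fun y => hsymm x y ▸ hx y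
  have hadj_flip : ∀ n x y, b y (R n x) = b (Radj n y) x := fun n x y => by
    rw [hsymm, hadj, hsymm]
  refine exists_div_add_of_alternating_sum_antidiagonal_eq_zero (S := ℂ) _ fun m => ?_
  rcases Nat.eq_zero_or_pos m with rfl | hm
  · simp [hR0]
  have hsum := sum_antidiagonal_map_eq_zero_of_symplectic b hb R Radj hadj_flip hsympl bdual hbd hm
  rw [← neg_eq_zero, ← sum_neg_distrib] at hsum
  refine (sum_congr rfl fun p hp => ?_).trans hsum
  have hp0 : ¬(p.1 = 0 ∧ p.2 = 0) := by rw [HasAntidiagonal.mem_antidiagonal] at hp; omega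
  simp [hp0]
end
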